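/- arXiv:1102.2615 — 4 statements merged into one kernel-verified Lean document; each statement's English description precedes it below -/
import Mathlib

section
/- If A is a self-adjoint linear operator on the space of real-valued functions on a finite set Ω, then any eventual cycle of the iteration ψ_i(n) = min(argmax_{1≤m≤M} [(A μ_m^{(i-1)})(n) + R_m(n)]), where μ_m^{(i-1)} is the indicator of {n : ψ_{i-1}(n) = m}, has length 1 or 2. -/
open Finset

noncomputable section

def ip {Ω : Type*} [Fintype Ω] (f g : Ω → ℝ) : ℝ := ∑ n, f n * g n

def mask {Ω : Type*} {M : ℕ} (ψ : Ω → Fin M) (m : Fin M) : Ω → ℝ :=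
  fun n => if ψ n = m then 1 else 0

open Classical in
def update {Ω : Type*} [Fintype Ω] {M : ℕ} [NeZero M]
    (A : (Ω → ℝ) → (Ω → ℝ)) (R : Fin M → Ω → ℝ) (ψ : Ω → Fin M) : Ω → Fin M :=
  fun n =>
    (Finset.univ.filter (fun m => ∀ m', A (mask ψ m') n + R m' n ≤ A (mask ψ m) n + R m n)).min'
      (by
        obtain ⟨m, -, hm⟩ := Finset.exists_max_image (Finset.univ : Finset (Fin M))
          (fun m => A (mask ψ m) n + R m n) ⟨0, Finset.mem_univ 0⟩
        exact ⟨m, Finset.mem_filter.mpr ⟨Finset.mem_univ m, fun m' => hm m' (Finset.mem_univ m')⟩⟩)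

section Aux

variable {Ω : Type*} [Fintype Ω] {M : ℕ} [NeZero M]
  (A : (Ω → ℝ) → (Ω → ℝ)) (R : Fin M → Ω → ℝ)

/-- the pointwise gain -/
def gfun (ψ : Ω → Fin M) (n : Ω) (m : Fin M) : ℝ := A (mask ψ m) n + R m n

open Classical in
lemma update_mem_filter (ψ : Ω → Fin M) (n : Ω) :
    update A R ψ n ∈ (Finset.univ.filter
      (fun m => ∀ m', A (mask ψ m') n + R m' n ≤ A (mask ψ m) n + R m n)) :=
  Finset.min'_mem _ _

lemma update_max (ψ : Ω → Fin M) (n : Ω) (m : Fin M) :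
    gfun A R ψ n m ≤ gfun A R ψ n (update A R ψ n) := by
  classical
  have h := update_mem_filter A R ψ n
  rw [Finset.mem_filter] at h
  exact h.2 m

open Classical in
lemma update_le (ψ : Ω → Fin M) (n : Ω) (m : Fin M)
    (hm : ∀ m', gfun A R ψ n m' ≤ gfun A R ψ n m) : update A R ψ n ≤ m :=
  Finset.min'_le _ _ (Finset.mem_filter.mpr ⟨Finset.mem_univ m, hm⟩)

/-- the Lyapunov function -/
def Lfun (ψ φ : Ω → Fin M) : ℝ :=
  (∑ n, gfun A R ψ n (φ n)) + ∑ n, R (ψ n) n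

lemma sum_g_eq (ψ φ : Ω → Fin M) :
    ∑ n, A (mask ψ (φ n)) n = ∑ m, ip (A (mask ψ m)) (mask φ m) := by
  classical
  unfold ip mask
  rw [Finset.sum_comm]
  apply Finset.sum_congr rfl
  intro n _
  simp [mul_ite, mul_one, mul_zero, Finset.sum_ite_eq]

lemma Lfun_symm (hsa : ∀ f g : Ω → ℝ, ip (A f) g = ip f (A g)) (ψ φ : Ω → Fin M) :
    Lfun A R ψ φ = Lfun A R φ ψ := by
  unfold Lfun gfun
  rw [Finset.sum_add_distrib, Finset.sum_add_distrib]
  rw [sum_g_eq, sum_g_eq]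
  have : ∀ m, ip (A (mask ψ m)) (mask φ m) = ip (A (mask φ m)) (mask ψ m) := by
    intro m
    rw [hsa]
    unfold ip
    exact Finset.sum_congr rfl (fun n _ => mul_comm _ _)
  rw [Finset.sum_congr rfl (fun m _ => this m)]
  ring

lemma Lfun_le_update (ψ φ : Ω → Fin M) :
    Lfun A R ψ φ ≤ Lfun A R ψ (update A R ψ) := by
  unfold Lfun
  gcongr with n _
  exact update_max A R ψ n (φ n)

lemma update_le_of_eq (ψ φ : Ω → Fin M)
    (h : Lfun A R ψ φ = Lfun A R ψ (update A R ψ)) (n : Ω) :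
    update A R ψ n ≤ φ n := by
  have hsum : ∑ k, gfun A R ψ k (φ k) = ∑ k, gfun A R ψ k (update A R ψ k) := by
    have := h; unfold Lfun at this; linarith
  have hpt : ∀ k, gfun A R ψ k (φ k) = gfun A R ψ k (update A R ψ k) := by
    intro k
    by_contra hk
    have hlt : gfun A R ψ k (φ k) < gfun A R ψ k (update A R ψ k) :=
      lt_of_le_of_ne (update_max A R ψ k (φ k)) hk
    have : ∑ k, gfun A R ψ k (φ k) < ∑ k, gfun A R ψ k (update A R ψ k) :=
      Finset.sum_lt_sum (fun i _ => update_max A R ψ i (φ i)) ⟨k, Finset.mem_univ k, hlt⟩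
    linarith
  exact update_le A R ψ n (φ n)
    (fun m' => (hpt n) ▸ (update_max A R ψ n m' : _))

end Aux

theorem stmt0 {Ω : Type*} [Fintype Ω] {M : ℕ} [NeZero M]
    (A : (Ω → ℝ) → (Ω → ℝ)) (hlin : IsLinearMap ℝ A)
    (hsa : ∀ f g : Ω → ℝ, ip (A f) g = ip f (A g))
    (R : Fin M → Ω → ℝ) (ψ₀ : Ω → Fin M) :
    ∃ i₀ : ℕ, Function.minimalPeriod (update A R) ((update A R)^[i₀] ψ₀) = 1 ∨
      Function.minimalPeriod (update A R) ((update A R)^[i₀] ψ₀) = 2 := by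
  classical
  set f := update A R with hfdef
  -- find a periodic point on the orbit
  obtain ⟨i, j, hij, hmap⟩ : ∃ i j : ℕ, i < j ∧ f^[i] ψ₀ = f^[j] ψ₀ := by
    obtain ⟨i, j, hne, h⟩ := Finite.exists_ne_map_eq_of_infinite (fun i : ℕ => f^[i] ψ₀)
    rcases hne.lt_or_gt with h' | h'
    · exact ⟨i, j, h', h⟩
    · exact ⟨j, i, h', h.symm⟩
  refine ⟨i, ?_⟩
  set x := f^[i] ψ₀ with hx
  have hper : Function.IsPeriodicPt f (j - i) x := by
    show f^[j - i] x = x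
    rw [hx, ← Function.iterate_add_apply, Nat.sub_add_cancel hij.le, ← hmap]
  have hKpos : 0 < Function.minimalPeriod f x :=
    hper.minimalPeriod_pos (Nat.sub_pos_of_lt hij)
  set K := Function.minimalPeriod f x with hK
  have hxK : f^[K] x = x := Function.isPeriodicPt_minimalPeriod f x
  -- the orbit
  set ψ : ℕ → (Ω → Fin M) := fun k => f^[k] x with hψ
  have hψs : ∀ k, ψ (k + 1) = f (ψ k) := by
    intro k; simp [hψ, Function.iterate_succ_apply']
  have hψK : ∀ k, ψ (k + K) = ψ k := by
    intro k
    show f^[k + K] x = f^[k] x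
    rw [Function.iterate_add_apply, hxK]
  -- the Lyapunov sequence
  set s : ℕ → ℝ := fun k => Lfun A R (ψ k) (ψ (k + 1)) with hs
  have hstep : ∀ k, s k ≤ s (k + 1) := by
    intro k
    calc s k = Lfun A R (ψ (k + 1)) (ψ k) := Lfun_symm A R hsa _ _
    _ ≤ Lfun A R (ψ (k + 1)) (update A R (ψ (k + 1))) := Lfun_le_update A R _ _
    _ = Lfun A R (ψ (k + 1)) (ψ (k + 1 + 1)) := by rw [hψs (k + 1)]
    _ = s (k + 1) := rfl
  have hmono : Monotone s := monotone_nat_of_le_succ hstep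
  have hconst : ∀ k, s k = s (k + 1) := by
    intro k
    refine le_antisymm (hstep k) ?_
    have h1 : s (k + 1) ≤ s (k + K) := hmono (by omega)
    have h2 : s (k + K) = s k := by
      show Lfun A R (ψ (k + K)) (ψ (k + K + 1)) = Lfun A R (ψ k) (ψ (k + 1))
      rw [hψK k, show k + K + 1 = (k + 1) + K by ring, hψK (k + 1)]
    rwa [h2] at h1
  -- decreasing subsequence
  have hdec : ∀ k n, ψ (k + 2) n ≤ ψ k n := by
    intro k n
    have heq : Lfun A R (ψ (k + 1)) (ψ k) = Lfun A R (ψ (k + 1)) (update A R (ψ (k + 1))) := by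
      have h1 : s k = Lfun A R (ψ (k + 1)) (ψ k) := Lfun_symm A R hsa _ _
      have h2 : s (k + 1) = Lfun A R (ψ (k + 1)) (update A R (ψ (k + 1))) := by
        show Lfun A R (ψ (k + 1)) (ψ (k + 1 + 1)) = _
        rw [hψs (k + 1)]
      rw [← h1, ← h2, hconst k]
    have hle := update_le_of_eq A R (ψ (k + 1)) (ψ k) heq n
    have h3 : ψ (k + 2) = update A R (ψ (k + 1)) := hψs (k + 1)
    rw [h3]
    exact hle
  have hdec' : ∀ l k n, ψ (k + 2 * l) n ≤ ψ k n := by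
    intro l
    induction l with
    | zero => intro k n; simp
    | succ l ih =>
      intro k n
      calc ψ (k + 2 * (l + 1)) n = ψ ((k + 2) + 2 * l) n := by ring_nf
      _ ≤ ψ (k + 2) n := ih (k + 2) n
      _ ≤ ψ k n := hdec k n
  have h2 : ψ 2 = ψ 0 := by
    funext n
    refine le_antisymm (hdec 0 n) ?_
    have h1 : ψ (2 + 2 * (K - 1)) n ≤ ψ 2 n := hdec' (K - 1) 2 n
    have h2K : 2 + 2 * (K - 1) = 0 + 2 * K := by omega
    rw [h2K] at h1
    have : ψ (0 + 2 * K) = ψ 0 := by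
      have := hψK 0
      have := hψK K
      simp only [zero_add, two_mul]
      rw [← Nat.add_zero (K + K)]
      calc ψ (K + K + 0) = ψ (0 + K + K) := by ring_nf
      _ = ψ (0 + K) := hψK (0 + K)
      _ = ψ 0 := hψK 0
    rwa [this] at h1
  have hper2 : Function.IsPeriodicPt f 2 x := by
    show f^[2] x = x
    exact h2
  have hdvd : K ∣ 2 := hper2.minimalPeriod_dvd
  rcases (Nat.dvd_prime Nat.prime_two).mp hdvd with h | h
  exacts [Or.inl h, Or.inr h]
end
end

section
/- Let A be a quasi-self-adjoint operator, A = DB, where D is multiplication by a strictly positive function λ : Ω → (0,∞) and B is self-adjoint. Then any eventual cycle of the iteration ψ_i(n) = min(argmax_m [(Aμ_m^{(i-1)})(n) + R_m(n)]) has length 1 or 2. -/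
open Finset

noncomputable section

theorem stmt4 {Ω : Type*} [Fintype Ω] {M : ℕ} [NeZero M]
    (B : (Ω → ℝ) → (Ω → ℝ)) (hlin : IsLinearMap ℝ B)
    (hsa : ∀ f g : Ω → ℝ, ip (B f) g = ip f (B g))
    (lam : Ω → ℝ) (hlam : ∀ n, 0 < lam n)
    (R : Fin M → Ω → ℝ) (ψ₀ : Ω → Fin M) :
    ∃ i₀ : ℕ,
      Function.minimalPeriod (update (fun f n => lam n * B f n) R)
        ((update (fun f n => lam n * B f n) R)^[i₀] ψ₀) = 1 ∨
      Function.minimalPeriod (update (fun f n => lam n * B f n) R)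
        ((update (fun f n => lam n * B f n) R)^[i₀] ψ₀) = 2 := by
  classical
  set A : (Ω → ℝ) → (Ω → ℝ) := fun f n => lam n * B f n with hA
  set F : (Ω → Fin M) → (Ω → Fin M) := update A R with hF
  -- basic facts about the update rule
  have hmem : ∀ (ψ : Ω → Fin M) (n : Ω), F ψ n ∈ Finset.univ.filter
      (fun m => ∀ m', A (mask ψ m') n + R m' n ≤ A (mask ψ m) n + R m n) :=
    fun ψ n => Finset.min'_mem _ _
  have hminle : ∀ (ψ : Ω → Fin M) (n : Ω) (m : Fin M), m ∈ Finset.univ.filter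
      (fun m => ∀ m', A (mask ψ m') n + R m' n ≤ A (mask ψ m) n + R m n) → F ψ n ≤ m :=
    fun ψ n m hm => Finset.min'_le _ _ hm
  -- rescaled gain function
  set g : (Ω → Fin M) → Ω → Fin M → ℝ := fun ψ n m => B (mask ψ m) n + R m n / lam n with hg
  have hgA : ∀ (ψ : Ω → Fin M) (n : Ω) (m : Fin M),
      A (mask ψ m) n + R m n = lam n * g ψ n m := by
    intro ψ n m
    have h := (hlam n).ne'
    simp only [hg, hA]
    field_simp
  have hgle : ∀ (ψ : Ω → Fin M) (n : Ω) (m m' : Fin M),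
      (A (mask ψ m') n + R m' n ≤ A (mask ψ m) n + R m n) ↔ g ψ n m' ≤ g ψ n m := by
    intro ψ n m m'
    rw [hgA, hgA, mul_le_mul_iff_right₀ (hlam n)]
  have hmax : ∀ (ψ : Ω → Fin M) (n : Ω) (m' : Fin M), g ψ n m' ≤ g ψ n (F ψ n) := by
    intro ψ n m'
    exact (hgle ψ n _ m').mp ((Finset.mem_filter.mp (hmem ψ n)).2 m')
  have hmin : ∀ (ψ : Ω → Fin M) (n : Ω) (m : Fin M),
      (∀ m', g ψ n m' ≤ g ψ n m) → F ψ n ≤ m := by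
    intro ψ n m hm
    exact hminle ψ n m (Finset.mem_filter.mpr
      ⟨Finset.mem_univ m, fun m' => (hgle ψ n m m').mpr (hm m')⟩)
  -- the energy
  set K : (Ω → Fin M) → (Ω → Fin M) → ℝ :=
    fun φ ψ => ∑ n, (g ψ n (φ n) + R (ψ n) n / lam n) with hK
  have hmask : ∀ (φ ψ : Ω → Fin M) (n : Ω),
      B (mask ψ (φ n)) n = ∑ m, mask φ m n * B (mask ψ m) n := by
    intro φ ψ n
    simp [mask, ite_mul, Finset.sum_ite_eq]
  have hSsymm : ∀ φ ψ : Ω → Fin M,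
      (∑ n, B (mask ψ (φ n)) n) = ∑ n, B (mask φ (ψ n)) n := by
    intro φ ψ
    calc ∑ n, B (mask ψ (φ n)) n
        = ∑ n, ∑ m, mask φ m n * B (mask ψ m) n :=
          Finset.sum_congr rfl fun n _ => hmask φ ψ n
      _ = ∑ m, ∑ n, B (mask ψ m) n * mask φ m n := by
          rw [Finset.sum_comm]
          exact Finset.sum_congr rfl fun m _ => Finset.sum_congr rfl fun n _ => mul_comm _ _
      _ = ∑ m, ip (B (mask ψ m)) (mask φ m) := rfl
      _ = ∑ m, ip (mask ψ m) (B (mask φ m)) :=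
          Finset.sum_congr rfl fun m _ => hsa _ _
      _ = ∑ n, ∑ m, mask ψ m n * B (mask φ m) n := Finset.sum_comm
      _ = ∑ n, B (mask φ (ψ n)) n :=
          Finset.sum_congr rfl fun n _ => (hmask ψ φ n).symm
  have hKsymm : ∀ φ ψ : Ω → Fin M, K φ ψ = K ψ φ := by
    intro φ ψ
    have h : ∀ φ ψ : Ω → Fin M, K φ ψ = (∑ n, B (mask ψ (φ n)) n)
        + ((∑ n, R (φ n) n / lam n) + ∑ n, R (ψ n) n / lam n) := by
      intro φ ψ
      simp only [hK, hg]
      rw [← Finset.sum_add_distrib, ← Finset.sum_add_distrib]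
      exact Finset.sum_congr rfl fun n _ => by ring
    rw [h, h, hSsymm]
    ring
  have hKle : ∀ ψ φ : Ω → Fin M, K φ ψ ≤ K (F ψ) ψ := by
    intro ψ φ
    apply Finset.sum_le_sum
    intro n _
    exact add_le_add_left (hmax ψ n (φ n)) _
  have hKeq : ∀ ψ φ : Ω → Fin M, K (F ψ) ψ = K φ ψ → ∀ n, F ψ n ≤ φ n := by
    intro ψ φ h n
    have hle : ∀ i ∈ (Finset.univ : Finset Ω),
        g ψ i (φ i) + R (ψ i) i / lam i ≤ g ψ i (F ψ i) + R (ψ i) i / lam i :=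
      fun i _ => add_le_add_left (hmax ψ i (φ i)) _
    have heach := (Finset.sum_eq_sum_iff_of_le hle).mp h.symm n (Finset.mem_univ n)
    have hgeq : g ψ n (φ n) = g ψ n (F ψ n) := add_right_cancel heach
    exact hmin ψ n (φ n) (fun m' => hgeq ▸ hmax ψ n m')
  -- find a periodic point on the orbit
  obtain ⟨i, j, hij, hije⟩ : ∃ i j : ℕ, i ≠ j ∧ F^[i] ψ₀ = F^[j] ψ₀ := by
    obtain ⟨i, j, h1, h2⟩ :=
      Finite.exists_ne_map_eq_of_infinite (f := fun i : ℕ => F^[i] ψ₀)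
    exact ⟨i, j, h1, h2⟩
  -- wlog i < j
  obtain ⟨i, d, hd, hFd⟩ : ∃ (i d : ℕ), 0 < d ∧ F^[d] (F^[i] ψ₀) = F^[i] ψ₀ := by
    rcases lt_or_gt_of_ne hij with h | h
    · exact ⟨i, j - i, by omega, by
        rw [← Function.iterate_add_apply, show j - i + i = j by omega]; exact hije.symm⟩
    · exact ⟨j, i - j, by omega, by
        rw [← Function.iterate_add_apply, show i - j + j = i by omega]; exact hije⟩
  refine ⟨i, ?_⟩
  set c : Ω → Fin M := F^[i] ψ₀ with hc
  have hcper : c ∈ Function.periodicPts F := ⟨d, hd, hFd⟩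
  set p : ℕ := Function.minimalPeriod F c with hpdef
  have hppos : 0 < p := Function.minimalPeriod_pos_of_mem_periodicPts hcper
  have hp : F^[p] c = c := Function.isPeriodicPt_minimalPeriod F c
  -- the energy along the orbit of c
  set a : ℕ → ℝ := fun k => K (F^[k + 1] c) (F^[k] c) with ha
  have hstep : ∀ k, a k ≤ a (k + 1) := by
    intro k
    have h2 : F^[k + 2] c = F (F^[k + 1] c) := Function.iterate_succ_apply' F (k + 1) c
    calc a k = K (F^[k] c) (F^[k + 1] c) := hKsymm _ _
      _ ≤ K (F (F^[k + 1] c)) (F^[k + 1] c) := hKle _ _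
      _ = a (k + 1) := by rw [ha]; rw [← h2]
  have hamono : Monotone a := monotone_nat_of_le_succ hstep
  have haper : ∀ k, a (k + p) = a k := by
    intro k
    have h1 : F^[k + p] c = F^[k] c := by rw [Function.iterate_add_apply, hp]
    have h2 : F^[k + p + 1] c = F^[k + 1] c := by
      rw [show k + p + 1 = (k + 1) + p by ring, Function.iterate_add_apply, hp]
    simp only [ha]
    rw [h1, h2]
  have haconst : ∀ k, a (k + 1) = a k := by
    intro k
    have h1 : a (k + 1) ≤ a (k + p) := hamono (by omega)
    have h2 := haper k
    have h3 := hstep k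
    linarith
  -- the two-step monotonicity
  have hdec : ∀ k n, F^[k + 2] c n ≤ F^[k] c n := by
    intro k n
    have h2 : F^[k + 2] c = F (F^[k + 1] c) := Function.iterate_succ_apply' F (k + 1) c
    have heq : K (F (F^[k + 1] c)) (F^[k + 1] c) = K (F^[k] c) (F^[k + 1] c) := by
      calc K (F (F^[k + 1] c)) (F^[k + 1] c) = a (k + 1) := by rw [ha]; rw [← h2]
        _ = a k := haconst k
        _ = K (F^[k] c) (F^[k + 1] c) := hKsymm _ _
    have := hKeq (F^[k + 1] c) (F^[k] c) heq n
    rw [h2]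
    exact this
  -- period 2
  have h2fix : F^[2] c = c := by
    have hmain : ∀ k, F^[2 * k + 2] c ≤ F^[2] c := by
      intro k
      induction k with
      | zero => simp
      | succ k ih =>
          have h := hdec (2 * k + 2)
          have hle : F^[2 * k + 2 + 2] c ≤ F^[2 * k + 2] c := fun n => h n
          rw [show 2 * (k + 1) + 2 = 2 * k + 2 + 2 by ring]
          exact le_trans hle ih
    have h2p : F^[2 * p] c = c := by
      rw [two_mul, Function.iterate_add_apply, hp, hp]
    have hAle : c ≤ F^[2] c := by
      have h := hmain (p - 1)
      rw [show 2 * (p - 1) + 2 = 2 * p by omega, h2p] at h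
      exact h
    have hBle : F^[2] c ≤ c := by
      have h := hdec 0
      exact fun n => by simpa using h n
    exact le_antisymm hBle hAle
  have hdvd : p ∣ 2 := Function.IsPeriodicPt.minimalPeriod_dvd h2fix
  rcases (Nat.dvd_prime Nat.prime_two).mp hdvd with h | h
  · exact Or.inl h
  · exact Or.inr h
end
end

section
/- If the discrete Fourier transform of g : Ω → ℝ is nonnegative and even, then for any initial configuration ψ_0 : Ω → {1,…,M} and any functions R_1,…,R_M : Ω → ℝ, the Active Masks iteration ψ_i(n) = min(argmax_m [(μ_m^{(i-1)} * g)(n) + R_m(n)]) converges to a fixed point in finitely many steps. -/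
open Finset

set_option linter.unusedSectionVars false
set_option maxHeartbeats 1000000
noncomputable section

def mconv {D : ℕ} {N : Fin D → ℕ} [∀ d, NeZero (N d)]
    (f g : ((d : Fin D) → ZMod (N d)) → ℝ) : ((d : Fin D) → ZMod (N d)) → ℝ :=
  fun n => ∑ k, f k * g (n - k)

def mdft {D : ℕ} {N : Fin D → ℕ} [∀ d, NeZero (N d)]
    (g : ((d : Fin D) → ZMod (N d)) → ℝ) (m : (d : Fin D) → ZMod (N d)) : ℂ :=
  ∑ n, (g n : ℂ) *
    Complex.exp (-2 * Real.pi * Complex.I *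
      ∑ d, ((m d).val : ℂ) * ((n d).val : ℂ) / (N d : ℂ))

namespace AMaux

variable {D : ℕ} {N : Fin D → ℕ} [∀ d, NeZero (N d)]

def ζ (N : Fin D → ℕ) (d : Fin D) : ℂ := Complex.exp (-2 * Real.pi * Complex.I / (N d))

lemma zeta_pow_N (d : Fin D) : ζ N d ^ (N d) = 1 := by
  rw [ζ, ← Complex.exp_nat_mul]
  have hN : (N d : ℂ) ≠ 0 := Nat.cast_ne_zero.mpr (NeZero.ne _)
  rw [show (N d : ℂ) * (-2 * Real.pi * Complex.I / (N d)) = -(2 * Real.pi * Complex.I) by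
    field_simp]
  rw [Complex.exp_neg, Complex.exp_two_pi_mul_I, inv_one]

lemma zeta_pow_mod (d : Fin D) (a : ℕ) : ζ N d ^ a = ζ N d ^ (a % N d) := by
  conv_lhs => rw [← Nat.div_add_mod a (N d)]
  rw [pow_add, pow_mul, zeta_pow_N, one_pow, one_mul]

lemma zeta_pow_congr (d : Fin D) {a b : ℕ} (h : a ≡ b [MOD N d]) : ζ N d ^ a = ζ N d ^ b := by
  rw [zeta_pow_mod, h, ← zeta_pow_mod]

def χ (m n : ((d : Fin D) → ZMod (N d))) : ℂ := ∏ d, ζ N d ^ ((m d).val * (n d).val)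

lemma chi_symm (m n : ((d : Fin D) → ZMod (N d))) : χ m n = χ n m := by
  simp only [χ, mul_comm]

lemma chi_zero (m : ((d : Fin D) → ZMod (N d))) : χ m 0 = 1 := by
  simp [χ]

lemma chi_add (m n n' : ((d : Fin D) → ZMod (N d))) : χ m (n + n') = χ m n * χ m n' := by
  rw [χ, χ, χ, ← Finset.prod_mul_distrib]
  refine Finset.prod_congr rfl fun d _ => ?_
  rw [← pow_add]
  refine zeta_pow_congr d ?_
  have h1 : ((n + n') d).val ≡ (n d).val + (n' d).val [MOD N d] := by
    simp only [Pi.add_apply, ZMod.val_add]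
    exact (Nat.mod_modEq _ _)
  calc (m d).val * ((n + n') d).val ≡ (m d).val * ((n d).val + (n' d).val) [MOD N d] :=
        h1.mul_left _
    _ = (m d).val * (n d).val + (m d).val * (n' d).val := by ring

lemma chi_add_left (m m' n : ((d : Fin D) → ZMod (N d))) : χ (m + m') n = χ m n * χ m' n := by
  rw [chi_symm, chi_add, chi_symm n m, chi_symm n m']

lemma chi_neg_right (m n : ((d : Fin D) → ZMod (N d))) : χ m (-n) = (χ m n)⁻¹ := by
  have h : χ m (-n) * χ m n = 1 := by rw [← chi_add, neg_add_cancel, chi_zero]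
  exact eq_inv_of_mul_eq_one_left h

lemma chi_neg_left (m n : ((d : Fin D) → ZMod (N d))) : χ (-m) n = χ m (-n) := by
  rw [chi_symm, chi_neg_right, chi_symm, chi_neg_right]

lemma chi_ne_zero (m n : ((d : Fin D) → ZMod (N d))) : χ m n ≠ 0 := by
  have : χ m (-n) * χ m n = 1 := by rw [← chi_add, neg_add_cancel, chi_zero]
  intro h; rw [h, mul_zero] at this; exact zero_ne_one this

lemma norm_chi (m n : ((d : Fin D) → ZMod (N d))) : ‖χ m n‖ = 1 := by
  rw [χ]
  rw [norm_prod]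
  refine Finset.prod_eq_one fun d _ => ?_
  rw [norm_pow, ζ, Complex.norm_exp]
  have : (-2 * Real.pi * Complex.I / (N d)).re = 0 := by
    have hN : ((N d : ℂ)) = ((N d : ℝ) : ℂ) := by push_cast; ring
    rw [hN, ← Complex.ofReal_ofNat, div_eq_mul_inv, ← Complex.ofReal_inv]
    simp [Complex.mul_re, Complex.mul_im]
  rw [this, Real.exp_zero, one_pow]

lemma conj_chi (m n : ((d : Fin D) → ZMod (N d))) : (starRingEnd ℂ) (χ m n) = χ m (-n) := by
  rw [chi_neg_right, Complex.inv_def, Complex.normSq_eq_norm_sq, norm_chi]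
  simp

lemma sum_zmod_pow {n : ℕ} [NeZero n] (w : ℂ) :
    ∑ x : ZMod n, w ^ x.val = ∑ j ∈ Finset.range n, w ^ j := by
  refine Finset.sum_nbij' (fun x => x.val) (fun j => (j : ZMod n)) ?_ ?_ ?_ ?_ ?_
  · intro a _; exact Finset.mem_range.mpr (ZMod.val_lt a)
  · intro a _; exact Finset.mem_univ _
  · intro a _; exact ZMod.natCast_rightInverse a
  · intro j hj; exact ZMod.val_cast_of_lt (Finset.mem_range.mp hj)
  · intro a _; rfl

lemma sum_chi (k : ((d : Fin D) → ZMod (N d))) : ∑ m : ((d : Fin D) → ZMod (N d)), χ m k = if k = 0 then (Fintype.card ((d : Fin D) → ZMod (N d)) : ℂ) else 0 := by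
  rw [show ∑ m : ((d : Fin D) → ZMod (N d)), χ m k = ∏ d, ∑ x : ZMod (N d), ζ N d ^ (x.val * (k d).val) by
    classical
    rw [Fintype.prod_sum]
    rfl]
  by_cases hk : k = 0
  · subst hk
    rw [if_pos rfl]
    simp only [Pi.zero_apply, ZMod.val_zero, mul_zero, pow_zero]
    simp [Fintype.card_pi, ZMod.card]
  · rw [if_neg hk]
    obtain ⟨d, hd⟩ : ∃ d, k d ≠ 0 := by
      by_contra h; push_neg at h; exact hk (funext h)
    refine Finset.prod_eq_zero (Finset.mem_univ d) ?_
    have hc1 : 0 < (k d).val := by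
      rcases Nat.eq_zero_or_pos (k d).val with h | h
      · exact absurd ((ZMod.val_eq_zero _).mp h) hd
      · exact h
    have hc2 : (k d).val < N d := ZMod.val_lt _
    set c := (k d).val
    set w := ζ N d ^ c with hw
    have hwN : w ^ (N d) = 1 := by
      rw [hw, ← pow_mul, mul_comm, pow_mul, zeta_pow_N, one_pow]
    have hw1 : w ≠ 1 := by
      rw [hw, ζ, ← Complex.exp_nat_mul]
      intro h
      obtain ⟨z, hz⟩ := Complex.exp_eq_one_iff.mp h
      rw [show (c : ℂ) * (-2 * Real.pi * Complex.I / (N d)) =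
          (-(c : ℂ) / (N d)) * (2 * Real.pi * Complex.I) by ring] at hz
      have h2pi : (2 * (Real.pi : ℂ) * Complex.I) ≠ 0 := by
        simp [Real.pi_ne_zero, Complex.I_ne_zero]
      have : (-(c : ℂ) / (N d)) = (z : ℂ) := mul_right_cancel₀ h2pi hz
      have hre : -(c : ℝ) / (N d) = (z : ℝ) := by
        have := congrArg Complex.re this
        simpa using this
      have hNpos : (0 : ℝ) < N d := by exact_mod_cast (Nat.pos_of_ne_zero (NeZero.ne _))
      have hlt : -(c : ℝ) / (N d) < 0 := by
        apply div_neg_of_neg_of_pos _ hNpos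
        simpa using (by exact_mod_cast hc1 : (0:ℝ) < c)
      have hgt : -1 < -(c : ℝ) / (N d) := by
        rw [neg_div, neg_lt_neg_iff, div_lt_one hNpos]
        exact_mod_cast hc2
      rw [hre] at hlt hgt
      have : z < 0 := by exact_mod_cast hlt
      have : -1 < z := by exact_mod_cast hgt
      omega
    rw [show (fun x : ZMod (N d) => ζ N d ^ (x.val * c)) = fun x => w ^ x.val by
      funext x; rw [hw, ← pow_mul, mul_comm]]
    rw [sum_zmod_pow, geom_sum_eq hw1, hwN, sub_self, zero_div]


-- mdft in terms of χ
lemma mdft_eq_chi (g : ((d : Fin D) → ZMod (N d)) → ℝ) (m : (d : Fin D) → ZMod (N d)) :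
    mdft g m = ∑ n, (g n : ℂ) * χ m n := by
  rw [mdft]
  refine Finset.sum_congr rfl fun n _ => ?_
  congr 1
  rw [show (-2 * (Real.pi:ℂ) * Complex.I * ∑ d, ((m d).val : ℂ) * ((n d).val : ℂ) / (N d : ℂ))
      = ∑ d, (((m d).val * (n d).val : ℕ) : ℂ) * (-2 * Real.pi * Complex.I / (N d : ℂ)) by
    rw [Finset.mul_sum]
    refine Finset.sum_congr rfl fun d _ => ?_
    push_cast
    ring]
  rw [Complex.exp_sum]
  refine Finset.prod_congr rfl fun d _ => ?_
  rw [Complex.exp_nat_mul]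
  rfl

-- Inversion formula
lemma inversion (h : ((d : Fin D) → ZMod (N d)) → ℝ) (x : (d : Fin D) → ZMod (N d)) :
    ∑ m, mdft h m * χ m (-x) = (Fintype.card ((d : Fin D) → ZMod (N d)) : ℂ) * (h x : ℂ) := by
  classical
  calc ∑ m, mdft h m * χ m (-x)
      = ∑ m, ∑ n, (h n : ℂ) * χ m (n - x) := by
        refine Finset.sum_congr rfl fun m _ => ?_
        rw [mdft_eq_chi, Finset.sum_mul]
        refine Finset.sum_congr rfl fun n _ => ?_
        rw [mul_assoc, ← chi_add]
        congr 2
        abel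
    _ = ∑ n, (h n : ℂ) * ∑ m, χ m (n - x) := by
        rw [Finset.sum_comm]
        refine Finset.sum_congr rfl fun n _ => ?_
        rw [Finset.mul_sum]
    _ = ∑ n, (h n : ℂ) * (if n - x = 0 then (Fintype.card ((d : Fin D) → ZMod (N d)) : ℂ) else 0) := by
        refine Finset.sum_congr rfl fun n _ => ?_
        rw [sum_chi]
    _ = (Fintype.card ((d : Fin D) → ZMod (N d)) : ℂ) * (h x : ℂ) := by
        rw [Finset.sum_eq_single x]
        · rw [if_pos (sub_self x), mul_comm]
        · intro n _ hn
          rw [if_neg (sub_ne_zero_of_ne hn), mul_zero]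
        · intro hx; exact absurd (Finset.mem_univ x) hx

lemma card_ne_zero' : ((Fintype.card ((d : Fin D) → ZMod (N d)) : ℂ)) ≠ 0 :=
  Nat.cast_ne_zero.mpr Fintype.card_ne_zero

-- g is even
lemma g_even (g : ((d : Fin D) → ZMod (N d)) → ℝ)
    (hdft : ∀ m, mdft g (-m) = mdft g m) (x : (d : Fin D) → ZMod (N d)) :
    g (-x) = g x := by
  classical
  have hneg : ∀ m, mdft (fun n => g (-n)) m = mdft g (-m) := by
    intro m
    rw [mdft_eq_chi, mdft_eq_chi]
    refine Fintype.sum_equiv (Equiv.neg ((d : Fin D) → ZMod (N d))) _ _ fun n => ?_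
    simp only [Equiv.neg_apply]
    congr 1
    rw [chi_neg_left, neg_neg]
  have h1 := inversion (fun n => g (-n)) x
  have h2 := inversion g x
  rw [show (∑ m, mdft (fun n => g (-n)) m * χ m (-x)) = ∑ m, mdft g m * χ m (-x) by
    refine Finset.sum_congr rfl fun m _ => ?_
    rw [hneg, hdft]] at h1
  rw [h2] at h1
  have := mul_left_cancel₀ card_ne_zero' h1.symm
  exact_mod_cast this

-- PSD
lemma psd (g : ((d : Fin D) → ZMod (N d)) → ℝ)
    (hdft : ∀ m, (mdft g m).im = 0 ∧ 0 ≤ (mdft g m).re)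
    (f : ((d : Fin D) → ZMod (N d)) → ℝ) :
    0 ≤ ip f (mconv f g) := by
  classical
  set c : ℂ := (Fintype.card ((d : Fin D) → ZMod (N d)) : ℂ) with hc
  have key : c * (ip f (mconv f g) : ℂ)
      = ∑ m, mdft g m * Complex.normSq (mdft f m) := by
    have expand : (ip f (mconv f g) : ℂ) = ∑ n, ∑ k, (f n : ℂ) * (f k : ℂ) * (g (n - k) : ℂ) := by
      rw [ip]
      push_cast [mconv]
      refine Finset.sum_congr rfl fun n _ => ?_
      rw [Finset.mul_sum]
      refine Finset.sum_congr rfl fun k _ => ?_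
      ring
    rw [expand, Finset.mul_sum]
    calc ∑ n, c * ∑ k, (f n : ℂ) * (f k : ℂ) * (g (n - k) : ℂ)
        = ∑ n, ∑ k, (f n : ℂ) * (f k : ℂ) * (∑ m, mdft g m * χ m (k - n)) := by
          refine Finset.sum_congr rfl fun n _ => ?_
          rw [Finset.mul_sum]
          refine Finset.sum_congr rfl fun k _ => ?_
          have := inversion g (n - k)
          rw [show -(n - k) = k - n by abel] at this
          rw [this, hc]
          ring
      _ = ∑ n, ∑ m, ∑ k, mdft g m * ((f k : ℂ) * χ m k) * ((f n : ℂ) * χ m (-n)) := by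
          refine Finset.sum_congr rfl fun n _ => ?_
          have h1 : ∀ k, (f n : ℂ) * (f k : ℂ) * (∑ m, mdft g m * χ m (k - n))
              = ∑ m, mdft g m * ((f k : ℂ) * χ m k) * ((f n : ℂ) * χ m (-n)) := by
            intro k
            rw [Finset.mul_sum]
            refine Finset.sum_congr rfl fun m _ => ?_
            rw [show k - n = k + -n by abel, chi_add]
            ring
          rw [show (∑ k, (f n : ℂ) * (f k : ℂ) * (∑ m, mdft g m * χ m (k - n)))
              = ∑ k, ∑ m, mdft g m * ((f k : ℂ) * χ m k) * ((f n : ℂ) * χ m (-n)) from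
            Finset.sum_congr rfl fun k _ => h1 k]
          exact Finset.sum_comm
      _ = ∑ m, ∑ n, ∑ k, mdft g m * ((f k : ℂ) * χ m k) * ((f n : ℂ) * χ m (-n)) :=
          Finset.sum_comm
      _ = ∑ m, mdft g m * ((∑ k, (f k : ℂ) * χ m k) * (∑ n, (f n : ℂ) * χ m (-n))) := by
          refine Finset.sum_congr rfl fun m _ => ?_
          rw [Finset.sum_mul_sum, Finset.mul_sum, Finset.sum_comm]
          refine Finset.sum_congr rfl fun k _ => ?_
          rw [Finset.mul_sum]
          refine Finset.sum_congr rfl fun n _ => ?_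
          ring
      _ = ∑ m, mdft g m * Complex.normSq (mdft f m) := by
          refine Finset.sum_congr rfl fun m _ => ?_
          congr 1
          have h1 : (∑ k, (f k : ℂ) * χ m k) = mdft f m := (mdft_eq_chi f m).symm
          have h2 : (∑ n, (f n : ℂ) * χ m (-n)) = (starRingEnd ℂ) (mdft f m) := by
            rw [mdft_eq_chi, map_sum]
            refine Finset.sum_congr rfl fun n _ => ?_
            rw [map_mul, conj_chi, Complex.conj_ofReal]
          rw [h1, h2, Complex.mul_conj]
  have key2 : (((Fintype.card ((d : Fin D) → ZMod (N d)) : ℝ) * ip f (mconv f g) : ℝ) : ℂ)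
      = ∑ m, mdft g m * Complex.normSq (mdft f m) := by
    rw [← key, hc]; push_cast; ring
  have hre : (Fintype.card ((d : Fin D) → ZMod (N d)) : ℝ) * ip f (mconv f g)
      = ∑ m, (mdft g m).re * Complex.normSq (mdft f m) := by
    have := congrArg Complex.re key2
    rw [Complex.ofReal_re] at this
    rw [this, Complex.re_sum]
    refine Finset.sum_congr rfl fun m _ => ?_
    rw [Complex.mul_re]
    simp
  have hpos : (0:ℝ) < (Fintype.card ((d : Fin D) → ZMod (N d)) : ℝ) := by
    exact_mod_cast Fintype.card_pos
  have hsum : 0 ≤ ∑ m, (mdft g m).re * Complex.normSq (mdft f m) :=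
    Finset.sum_nonneg fun m _ => mul_nonneg (hdft m).2 (Complex.normSq_nonneg _)
  nlinarith [hre, hsum, hpos]

end AMaux

section IpLemmas

variable {Ω : Type*} [Fintype Ω]

lemma ip_expand4 (a b c d : Ω → ℝ) (t : ℝ) :
    ip (fun n => a n + t * b n) (fun n => c n + t * d n)
      = ip a c + t * ip a d + t * ip b c + t^2 * ip b d := by
  unfold ip
  calc ∑ n, (a n + t * b n) * (c n + t * d n)
      = ∑ n, (a n * c n + (t * (a n * d n) + (t * (b n * c n) + t^2 * (b n * d n)))) :=
        Finset.sum_congr rfl fun n _ => by ring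
    _ = _ := by
        rw [Finset.sum_add_distrib, Finset.sum_add_distrib, Finset.sum_add_distrib,
          ← Finset.mul_sum, ← Finset.mul_sum, ← Finset.mul_sum]
        ring

lemma ip_sub_left (a b c : Ω → ℝ) :
    ip (fun n => a n - b n) c = ip a c - ip b c := by
  unfold ip
  rw [← Finset.sum_sub_distrib]
  exact Finset.sum_congr rfl fun n _ => by ring

lemma ip_sub_right (a b c : Ω → ℝ) :
    ip a (fun n => b n - c n) = ip a b - ip a c := by
  unfold ip
  rw [← Finset.sum_sub_distrib]
  exact Finset.sum_congr rfl fun n _ => by ring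

lemma ip_add_right (a b c : Ω → ℝ) :
    ip a (fun n => b n + c n) = ip a b + ip a c := by
  unfold ip
  rw [← Finset.sum_add_distrib]
  exact Finset.sum_congr rfl fun n _ => by ring

lemma ip_sq_nonneg (a : Ω → ℝ) : 0 ≤ ip a a :=
  Finset.sum_nonneg fun n _ => mul_self_nonneg _

lemma ip_self_eq_zero {a : Ω → ℝ} (h : ip a a = 0) : ∀ n, a n = 0 := by
  intro n
  have h2 : ∀ x ∈ Finset.univ, (0:ℝ) ≤ a x * a x := fun x _ => mul_self_nonneg _
  have := (Finset.sum_eq_zero_iff_of_nonneg h2).mp h n (Finset.mem_univ n)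
  nlinarith [this]

end IpLemmas

section AbstractConv

variable {Ω : Type*} [Fintype Ω] {M : ℕ} [NeZero M]
variable (A : (Ω → ℝ) → (Ω → ℝ)) (R : Fin M → Ω → ℝ)

def En (ψ : Ω → Fin M) : ℝ :=
  (∑ m, ip (mask ψ m) (A (mask ψ m))) + 2 * ∑ m, ip (mask ψ m) (R m)

open Classical in
lemma update_mem (ψ : Ω → Fin M) (n : Ω) :
    update A R ψ n ∈ Finset.univ.filter
      (fun m => ∀ m', A (mask ψ m') n + R m' n ≤ A (mask ψ m) n + R m n) := by
  unfold update
  exact Finset.min'_mem _ _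

lemma update_spec (ψ : Ω → Fin M) (n : Ω) (m' : Fin M) :
    A (mask ψ m') n + R m' n ≤ A (mask ψ (update A R ψ n)) n + R (update A R ψ n) n := by
  classical
  have := update_mem A R ψ n
  exact (Finset.mem_filter.mp this).2 m'

lemma min'_eq_of_eq {α : Type*} [LinearOrder α] {s t : Finset α} (h : s = t)
    (hs : s.Nonempty) : s.min' hs = t.min' (h ▸ hs) := by subst h; rfl

open Classical in
lemma update_congr {ψ ψ' : Ω → Fin M} (h : ∀ m, A (mask ψ m) = A (mask ψ' m)) :
    update A R ψ = update A R ψ' := by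
  funext n
  unfold update
  apply min'_eq_of_eq
  refine Finset.filter_congr fun m _ => ?_
  simp only [h]

lemma sum_mask_ip (F : Fin M → Ω → ℝ) (ψ : Ω → Fin M) :
    ∑ m, ip (mask ψ m) (F m) = ∑ n, F (ψ n) n := by
  classical
  unfold ip mask
  rw [Finset.sum_comm]
  refine Finset.sum_congr rfl fun n _ => ?_
  simp only [ite_mul, one_mul, zero_mul]
  rw [Finset.sum_ite_eq]
  simp

-- abstract kernel lemma
lemma ker_of
    (hsym : ∀ a b, ip a (A b) = ip b (A a))
    (hpsd : ∀ f, 0 ≤ ip f (A f))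
    (hadd : ∀ a b, A (fun n => a n + b n) = fun n => A a n + A b n)
    (hsmul : ∀ (t : ℝ) a, A (fun n => t * a n) = fun n => t * A a n)
    (f : Ω → ℝ) (hf : ip f (A f) = 0) : ∀ n, A f n = 0 := by
  have key : ∀ t : ℝ, 0 ≤ ip (A f) (A (A f)) + 2 * t * ip (A f) (A f) := by
    intro t
    have h1 := hpsd (fun n => A f n + t * f n)
    have h2 : A (fun n => A f n + t * f n) = fun n => A (A f) n + t * A f n := by
      rw [hadd, hsmul]
    rw [h2, ip_expand4] at h1
    have h3 : ip f (A (A f)) = ip (A f) (A f) := hsym f (A f)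
    rw [h3, hf] at h1
    nlinarith [h1]
  have hq_zero : ip (A f) (A f) = 0 := by
    by_contra hne
    have hqpos : 0 < ip (A f) (A f) := lt_of_le_of_ne (ip_sq_nonneg _) (Ne.symm hne)
    set B := ip (A f) (A (A f))
    set q := ip (A f) (A f)
    have hk := key (-(B + 1) / (2 * q))
    have hmul : 2 * (-(B + 1) / (2 * q)) * q = -(B + 1) := by
      field_simp
    rw [hmul] at hk
    linarith [hk]
  exact ip_self_eq_zero hq_zero

-- per-label energy identity
lemma per_m
    (hsym : ∀ a b, ip a (A b) = ip b (A a))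
    (hsub : ∀ a b, A (fun n => a n - b n) = fun n => A a n - A b n)
    (μ' μ r : Ω → ℝ) :
    ip μ' (A μ') + 2 * ip μ' r - (ip μ (A μ) + 2 * ip μ r)
      = ip (fun n => μ' n - μ n) (A (fun n => μ' n - μ n))
        + 2 * (ip μ' (fun n => A μ n + r n) - ip μ (fun n => A μ n + r n)) := by
  have hδ : A (fun n => μ' n - μ n) = fun n => A μ' n - A μ n := hsub μ' μ
  rw [hδ, ip_sub_left, ip_sub_right, ip_sub_right, ip_add_right, ip_add_right]
  have hsym1 : ip μ (A μ') = ip μ' (A μ) := hsym μ μ'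
  linarith [hsym1]

lemma En_diff
    (hsym : ∀ a b, ip a (A b) = ip b (A a))
    (hsub : ∀ a b, A (fun n => a n - b n) = fun n => A a n - A b n)
    (ψ : Ω → Fin M) :
    En A R (update A R ψ) - En A R ψ
      = (∑ m, ip (fun n => mask (update A R ψ) m n - mask ψ m n)
          (A (fun n => mask (update A R ψ) m n - mask ψ m n)))
        + 2 * ((∑ n, (A (mask ψ (update A R ψ n)) n + R (update A R ψ n) n))
            - ∑ n, (A (mask ψ (ψ n)) n + R (ψ n) n)) := by
  classical
  set ψ' := update A R ψ with hψ'
  have h1 : En A R ψ' - En A R ψ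
      = ∑ m, (ip (mask ψ' m) (A (mask ψ' m)) + 2 * ip (mask ψ' m) (R m)
          - (ip (mask ψ m) (A (mask ψ m)) + 2 * ip (mask ψ m) (R m))) := by
    unfold En
    rw [Finset.sum_sub_distrib, Finset.sum_add_distrib, Finset.sum_add_distrib,
      ← Finset.mul_sum, ← Finset.mul_sum]
  have h2 : ∀ m, (ip (mask ψ' m) (A (mask ψ' m)) + 2 * ip (mask ψ' m) (R m)
          - (ip (mask ψ m) (A (mask ψ m)) + 2 * ip (mask ψ m) (R m)))
      = ip (fun n => mask ψ' m n - mask ψ m n) (A (fun n => mask ψ' m n - mask ψ m n))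
        + 2 * (ip (mask ψ' m) (fun n => A (mask ψ m) n + R m n)
            - ip (mask ψ m) (fun n => A (mask ψ m) n + R m n)) :=
    fun m => per_m A hsym hsub _ _ _
  rw [h1, Finset.sum_congr rfl (fun m _ => h2 m), Finset.sum_add_distrib,
    ← Finset.mul_sum, Finset.sum_sub_distrib]
  rw [sum_mask_ip (fun m n => A (mask ψ m) n + R m n) ψ',
    sum_mask_ip (fun m n => A (mask ψ m) n + R m n) ψ]

lemma En_mono
    (hsym : ∀ a b, ip a (A b) = ip b (A a))
    (hpsd : ∀ f, 0 ≤ ip f (A f))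
    (hsub : ∀ a b, A (fun n => a n - b n) = fun n => A a n - A b n)
    (ψ : Ω → Fin M) :
    En A R ψ ≤ En A R (update A R ψ) := by
  have hd := En_diff A R hsym hsub ψ
  have hQ : 0 ≤ ∑ m, ip (fun n => mask (update A R ψ) m n - mask ψ m n)
      (A (fun n => mask (update A R ψ) m n - mask ψ m n)) :=
    Finset.sum_nonneg fun m _ => hpsd _
  have hP : (∑ n, (A (mask ψ (ψ n)) n + R (ψ n) n))
      ≤ ∑ n, (A (mask ψ (update A R ψ n)) n + R (update A R ψ n) n) :=
    Finset.sum_le_sum fun n _ => update_spec A R ψ n (ψ n)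
  linarith [hd, hQ, hP]

lemma En_fix
    (hsym : ∀ a b, ip a (A b) = ip b (A a))
    (hpsd : ∀ f, 0 ≤ ip f (A f))
    (hadd : ∀ a b, A (fun n => a n + b n) = fun n => A a n + A b n)
    (hsmul : ∀ (t : ℝ) a, A (fun n => t * a n) = fun n => t * A a n)
    (hsub : ∀ a b, A (fun n => a n - b n) = fun n => A a n - A b n)
    (ψ : Ω → Fin M) (h : En A R (update A R ψ) = En A R ψ) :
    update A R (update A R ψ) = update A R ψ := by
  classical
  have hd := En_diff A R hsym hsub ψ
  rw [h, sub_self] at hd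
  have hQ : ∀ m ∈ Finset.univ, (0:ℝ) ≤ ip (fun n => mask (update A R ψ) m n - mask ψ m n)
      (A (fun n => mask (update A R ψ) m n - mask ψ m n)) := fun m _ => hpsd _
  have hP : (∑ n, (A (mask ψ (ψ n)) n + R (ψ n) n))
      ≤ ∑ n, (A (mask ψ (update A R ψ n)) n + R (update A R ψ n) n) :=
    Finset.sum_le_sum fun n _ => update_spec A R ψ n (ψ n)
  have hQsum : (∑ m, ip (fun n => mask (update A R ψ) m n - mask ψ m n)
      (A (fun n => mask (update A R ψ) m n - mask ψ m n))) = 0 := by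
    have := Finset.sum_nonneg hQ
    linarith [hd, hP, this]
  have hzero : ∀ m, ∀ n, A (fun n => mask (update A R ψ) m n - mask ψ m n) n = 0 := by
    intro m
    refine ker_of A hsym hpsd hadd hsmul _ ?_
    exact (Finset.sum_eq_zero_iff_of_nonneg hQ).mp hQsum m (Finset.mem_univ m)
  have hAeq : ∀ m, A (mask (update A R ψ) m) = A (mask ψ m) := by
    intro m
    funext n
    have h1 := hzero m n
    rw [hsub] at h1
    simp only [] at h1
    linarith [h1]
  exact update_congr A R hAeq

theorem conv_abstract
    (hsym : ∀ a b, ip a (A b) = ip b (A a))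
    (hpsd : ∀ f, 0 ≤ ip f (A f))
    (hadd : ∀ a b, A (fun n => a n + b n) = fun n => A a n + A b n)
    (hsmul : ∀ (t : ℝ) a, A (fun n => t * a n) = fun n => t * A a n)
    (hsub : ∀ a b, A (fun n => a n - b n) = fun n => A a n - A b n)
    (ψ₀ : Ω → Fin M) :
    ∃ i₀ : ℕ, update A R ((update A R)^[i₀] ψ₀) = (update A R)^[i₀] ψ₀ := by
  classical
  have hfin : ∃ i j, i < j ∧ (update A R)^[i] ψ₀ = (update A R)^[j] ψ₀ := by
    obtain ⟨i, j, hij, h⟩ :=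
      Finite.exists_ne_map_eq_of_infinite (fun i : ℕ => (update A R)^[i] ψ₀)
    rcases lt_or_gt_of_ne hij with hlt | hgt
    · exact ⟨i, j, hlt, h⟩
    · exact ⟨j, i, hgt, h.symm⟩
  obtain ⟨i, j, hij, heq⟩ := hfin
  have mono : Monotone fun k => En A R ((update A R)^[k] ψ₀) := by
    apply monotone_nat_of_le_succ
    intro k
    rw [Function.iterate_succ_apply']
    exact En_mono A R hsym hpsd hsub _
  have h1 : En A R (update A R ((update A R)^[i] ψ₀)) = En A R ((update A R)^[i] ψ₀) := by
    have a1 : En A R ((update A R)^[i] ψ₀) ≤ En A R ((update A R)^[i+1] ψ₀) :=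
      mono (Nat.le_succ i)
    have a2 : En A R ((update A R)^[i+1] ψ₀) ≤ En A R ((update A R)^[j] ψ₀) := mono hij
    rw [← heq] at a2
    rw [Function.iterate_succ_apply'] at a1 a2
    linarith
  refine ⟨i + 1, ?_⟩
  rw [Function.iterate_succ_apply']
  exact En_fix A R hsym hpsd hadd hsmul hsub _ h1

end AbstractConv


section MconvLemmas

variable {D : ℕ} {N : Fin D → ℕ} [∀ d, NeZero (N d)]

lemma mconv_ip_symm (g : ((d : Fin D) → ZMod (N d)) → ℝ) (hg : ∀ x, g (-x) = g x)
    (a b : ((d : Fin D) → ZMod (N d)) → ℝ) : ip a (mconv b g) = ip b (mconv a g) := by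
  unfold ip mconv
  calc ∑ n, a n * ∑ k, b k * g (n - k)
      = ∑ n, ∑ k, a n * (b k * g (n - k)) := by
        refine Finset.sum_congr rfl fun n _ => ?_
        rw [Finset.mul_sum]
    _ = ∑ k, ∑ n, a n * (b k * g (n - k)) := Finset.sum_comm
    _ = ∑ k, b k * ∑ n, a n * g (k - n) := by
        refine Finset.sum_congr rfl fun k _ => ?_
        rw [Finset.mul_sum]
        refine Finset.sum_congr rfl fun n _ => ?_
        rw [show g (k - n) = g (n - k) by rw [← hg (n - k)]; congr 1; abel]
        ring

lemma mconv_add (g a b : ((d : Fin D) → ZMod (N d)) → ℝ) :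
    mconv (fun n => a n + b n) g = fun n => mconv a g n + mconv b g n := by
  funext n
  unfold mconv
  rw [← Finset.sum_add_distrib]
  exact Finset.sum_congr rfl fun k _ => by ring

lemma mconv_smul (g : ((d : Fin D) → ZMod (N d)) → ℝ) (t : ℝ)
    (a : ((d : Fin D) → ZMod (N d)) → ℝ) :
    mconv (fun n => t * a n) g = fun n => t * mconv a g n := by
  funext n
  unfold mconv
  rw [Finset.mul_sum]
  exact Finset.sum_congr rfl fun k _ => by ring

lemma mconv_sub (g a b : ((d : Fin D) → ZMod (N d)) → ℝ) :
    mconv (fun n => a n - b n) g = fun n => mconv a g n - mconv b g n := by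
  funext n
  unfold mconv
  rw [← Finset.sum_sub_distrib]
  exact Finset.sum_congr rfl fun k _ => by ring

end MconvLemmas

theorem stmt9 {D : ℕ} {N : Fin D → ℕ} [∀ d, NeZero (N d)] {M : ℕ} [NeZero M]
    (g : ((d : Fin D) → ZMod (N d)) → ℝ)
    (hdft : ∀ m, (mdft g m).im = 0 ∧ 0 ≤ (mdft g m).re ∧ mdft g (-m) = mdft g m)
    (R : Fin M → ((d : Fin D) → ZMod (N d)) → ℝ)
    (ψ₀ : ((d : Fin D) → ZMod (N d)) → Fin M) :
    ∃ i₀ : ℕ,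
      update (fun f => mconv f g) R ((update (fun f => mconv f g) R)^[i₀] ψ₀) =
        (update (fun f => mconv f g) R)^[i₀] ψ₀ := by
  classical
  have heven : ∀ x, g (-x) = g x := AMaux.g_even g (fun m => (hdft m).2.2)
  exact conv_abstract (fun f => mconv f g) R
    (fun a b => mconv_ip_symm g heven a b)
    (fun f => AMaux.psd g (fun m => ⟨(hdft m).1, (hdft m).2.1⟩) f)
    (fun a b => mconv_add g a b)
    (fun t a => mconv_smul g t a)
    (fun a b => mconv_sub g a b) ψ₀
end
end

section
/- Let Ω = Z_N with N even ≥ 4, g = δ_{−1} + δ_0 + δ_1, and all R_m = 0 with M = 2 labels. Then ψ_0 = the configuration with label 2 on even pixels and label 1 on odd pixels is mapped by the iterative voting rule to the configuration with label 2 on odd pixels and label 1 on even pixels, and vice versa; hence iterative voting has a cycle of length exactly 2 and does not always converge. -/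
open Finset

noncomputable section

def conv {N : ℕ} [NeZero N] (f g : ZMod N → ℝ) : ZMod N → ℝ :=
  fun n => ∑ k, f k * g (n - k)

lemma update_eq_of {Ω : Type*} [Fintype Ω] {M : ℕ} [NeZero M]
    (A : (Ω → ℝ) → (Ω → ℝ)) (R : Fin M → Ω → ℝ) (ψ : Ω → Fin M) (n : Ω) (m : Fin M)
    (h : ∀ m' : Fin M, m' ≠ m → A (mask ψ m') n + R m' n < A (mask ψ m) n + R m n) :
    update A R ψ n = m := by
  classical
  unfold update
  refine le_antisymm (Finset.min'_le _ _ ?_) (Finset.le_min' _ _ _ ?_)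
  · simp only [Finset.mem_filter, Finset.mem_univ, true_and]
    intro m'
    by_cases hh : m' = m
    · exact hh ▸ le_refl _
    · exact (h m' hh).le
  · intro y hy
    simp only [Finset.mem_filter, Finset.mem_univ, true_and] at hy
    by_cases hh : y = m
    · exact hh ▸ le_refl _
    · exact absurd (hy m) (not_le.mpr (h y hh))

lemma conv3 {N : ℕ} [NeZero N] (g : ZMod N → ℝ)
    (hg : g = fun k => (if k = -1 then (1:ℝ) else 0) + (if k = 0 then 1 else 0) +
      (if k = 1 then 1 else 0)) (f : ZMod N → ℝ) (n : ZMod N) :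
    conv f g n = f (n + 1) + f n + f (n - 1) := by
  subst hg
  unfold conv
  have hkey : ∀ k c : ZMod N, (n - k = c) ↔ (k = n - c) := by
    intro k c
    constructor <;> intro h
    · subst h; ring
    · subst h; ring
  simp only [mul_add, Finset.sum_add_distrib, hkey, mul_ite, mul_one, mul_zero,
    Finset.sum_ite_eq', Finset.mem_univ, if_true]
  simp [sub_neg_eq_add]

lemma parstep {N : ℕ} [NeZero N] (hN : 4 ≤ N) (hNeven : 2 ∣ N) (n : ZMod N) :
    (n + 1).val % 2 = (n.val + 1) % 2 := by
  haveI : Fact (1 < N) := ⟨by omega⟩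
  rw [ZMod.val_add, ZMod.val_one, Nat.mod_mod_of_dvd _ hNeven]

lemma parsub {N : ℕ} [NeZero N] (hN : 4 ≤ N) (hNeven : 2 ∣ N) (n : ZMod N) :
    (n - 1).val % 2 = (n.val + 1) % 2 := by
  have h := parstep hN hNeven (n - 1)
  rw [sub_add_cancel] at h
  omega

theorem stmt11 {N : ℕ} [NeZero N] (hN : 4 ≤ N) (hNeven : 2 ∣ N)
    (g : ZMod N → ℝ)
    (hg : g = fun k => (if k = -1 then (1:ℝ) else 0) + (if k = 0 then 1 else 0) +
      (if k = 1 then 1 else 0))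
    (ψ₀ ψ₁ : ZMod N → Fin 2)
    (hψ₀ : ψ₀ = fun n => if n.val % 2 = 0 then 1 else 0)
    (hψ₁ : ψ₁ = fun n => if n.val % 2 = 0 then 0 else 1) :
    update (fun f => conv f g) (fun _ _ => (0 : ℝ)) ψ₀ = ψ₁ ∧
    update (fun f => conv f g) (fun _ _ => (0 : ℝ)) ψ₁ = ψ₀ ∧
    ψ₀ ≠ ψ₁ := by
  subst hψ₀ hψ₁
  refine ⟨?_, ?_, ?_⟩
  · funext n
    apply update_eq_of
    intro m' hm'
    simp only [conv3 g hg]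
    have hp1 := parstep hN hNeven n
    have hp2 := parsub hN hNeven n
    by_cases hpar : n.val % 2 = 0
    · have h1 : (n + 1).val % 2 ≠ 0 := by omega
      have h2 : (n - 1).val % 2 ≠ 0 := by omega
      have hm'1 : m' = 1 := by
        simp [hpar] at hm'; omega
      simp [mask, hpar, h1, h2, hm'1]
    · have h1 : (n + 1).val % 2 = 0 := by omega
      have h2 : (n - 1).val % 2 = 0 := by omega
      have hm'0 : m' = 0 := by
        simp [hpar] at hm'; omega
      simp [mask, hpar, h1, h2, hm'0]
  · funext n
    apply update_eq_of
    intro m' hm'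
    simp only [conv3 g hg]
    have hp1 := parstep hN hNeven n
    have hp2 := parsub hN hNeven n
    by_cases hpar : n.val % 2 = 0
    · have h1 : (n + 1).val % 2 ≠ 0 := by omega
      have h2 : (n - 1).val % 2 ≠ 0 := by omega
      have hm'1 : m' = 0 := by
        simp [hpar] at hm'; omega
      simp [mask, hpar, h1, h2, hm'1]
    · have h1 : (n + 1).val % 2 = 0 := by omega
      have h2 : (n - 1).val % 2 = 0 := by omega
      have hm'0 : m' = 1 := by
        simp [hpar] at hm'; omega
      simp [mask, hpar, h1, h2, hm'0]
  · intro h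
    have := congrFun h 0
    simp [ZMod.val_zero] at this
end
end
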